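/- arXiv:1406.1766 — 2 statements merged into one kernel-verified Lean document; each statement's English description precedes it below -/
import Mathlib

section
/- w-sat(Q_n, Q_2) = 2^n − 1 for all n ≥ 1. That is, there exists a weakly (Q_n, Q_2)-saturated spanning tree of Q_n, and no weakly (Q_n, Q_2)-saturated graph has fewer than 2^n − 1 edges. -/
/-- The hypercube graph `Q_n` on vertex set `{0,1}^n`. -/
def Qc (n : ℕ) : SimpleGraph (Fin n → ZMod 2) :=
  SimpleGraph.fromRel (fun x y => hammingDist x y = 1)

/-- `f` is an (injective, edge-preserving) copy of the cube `Q_m` in the graph `G`. -/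
def IsCubeCopy (m : ℕ) {V : Type*} (G : SimpleGraph V) (f : (Fin m → ZMod 2) → V) : Prop :=
  Function.Injective f ∧ ∀ x y, (Qc m).Adj x y → G.Adj (f x) (f y)

/-- `G` contains a copy of the cube `Q_m`. -/
def ContainsCube (m : ℕ) {V : Type*} (G : SimpleGraph V) : Prop :=
  ∃ f, IsCubeCopy m G f

/-- `G` is `Q_m`-free. -/
def CubeFree (m : ℕ) {V : Type*} (G : SimpleGraph V) : Prop :=
  ¬ ContainsCube m G

/-- Adding the edge `e` to `G` creates a new copy of `Q_m`. -/
def NewCube (m : ℕ) {V : Type*} (G : SimpleGraph V) (e : Sym2 V) : Prop :=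
  ∃ f, IsCubeCopy m (G ⊔ SimpleGraph.fromEdgeSet {e}) f ∧ ¬ IsCubeCopy m G f

/-- `G` is `(Q_n, Q_m)`-semi-saturated. -/
def SemiSaturated (n m : ℕ) (G : SimpleGraph (Fin n → ZMod 2)) : Prop :=
  G ≤ Qc n ∧ ∀ e ∈ (Qc n).edgeSet, e ∉ G.edgeSet → NewCube m G e

/-- `G` is `(Q_n, Q_m)`-saturated. -/
def Saturated (n m : ℕ) (G : SimpleGraph (Fin n → ZMod 2)) : Prop :=
  G ≤ Qc n ∧ CubeFree m G ∧
    ∀ e ∈ (Qc n).edgeSet, e ∉ G.edgeSet → ContainsCube m (G ⊔ SimpleGraph.fromEdgeSet {e})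
/-- `G` is weakly `(Q_n, Q_m)`-saturated: the edges of `Q_n` missing from `G` can be added
one at a time, in some order, so that each newly added edge creates a new copy of `Q_m`. -/
def WeaklySaturated (n m : ℕ) (G : SimpleGraph (Fin n → ZMod 2)) : Prop :=
  G ≤ Qc n ∧ ∃ l : List (Sym2 (Fin n → ZMod 2)),
    l.Nodup ∧ (∀ e ∈ l, e ∈ (Qc n).edgeSet \ G.edgeSet) ∧
    (Qc n).edgeSet ⊆ G.edgeSet ∪ {e | e ∈ l} ∧
    ∀ i : Fin l.length,
      NewCube m (G ⊔ SimpleGraph.fromEdgeSet {e | e ∈ l.take i.1}) (l.get i)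

/-- The weak saturation number `w-sat(Q_n, Q_m)`. -/
noncomputable def wsatNum (n m : ℕ) : ℕ :=
  sInf {k | ∃ G : SimpleGraph (Fin n → ZMod 2), WeaklySaturated n m G ∧ G.edgeSet.ncard = k}

/-!
Lower bound: a newly added edge closes a 4-cycle whose three other edges are already present,
so its endpoints were already connected. Hence every weakly saturated graph has the
connectivity of `Q_n`, and being connected on `2^n` vertices it has at least `2^n - 1` edges.

Upper bound: join every nonzero vertex to the vertex obtained by clearing its highest nonzero
coordinate. A missing edge `{u, u + e_j}` with `u_j ≠ 0` lies below the top coordinate `k`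
of `u`; in the square `u, u + e_j, u + e_j + e_k, u + e_k` both `k`-edges are tree edges,
and the edge `{u + e_k, u + e_k + e_j}` is a tree edge or has endpoints of smaller total
Hamming weight. So adding the missing edges in order of increasing total weight creates a
new square each time.
-/

open SimpleGraph

lemma ZMod.eq_zero_or_one (a : ZMod 2) : a = 0 ∨ a = 1 := by
  revert a; decide

lemma ZMod.add_one_eq_zero_of_ne_zero {a : ZMod 2} (ha : a ≠ 0) : a + 1 = 0 := by
  revert a; decide

section SingleCoordinate

variable {ι : Type*} [DecidableEq ι]

lemma add_single_add_single (x : ι → ZMod 2) (j : ι) :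
    x + Pi.single j 1 + Pi.single j 1 = x := by
  rw [add_assoc, ← Pi.single_add, CharTwo.add_self_eq_zero, Pi.single_zero, add_zero]

variable [Fintype ι]

lemma hammingNorm_eq_one_iff {v : ι → ZMod 2} :
    hammingNorm v = 1 ↔ ∃ j, v = Pi.single j 1 := by
  constructor
  · intro h
    obtain ⟨j, hj⟩ := Finset.card_eq_one.mp h
    refine ⟨j, funext fun i => ?_⟩
    have hi := Finset.ext_iff.mp hj i
    simp only [Finset.mem_filter, Finset.mem_univ, true_and, Finset.mem_singleton] at hi
    rcases eq_or_ne i j with rfl | hij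
    · simpa using (ZMod.eq_zero_or_one (v i)).resolve_left (hi.mpr rfl)
    · simpa [hij] using mt hi.mp hij
  · rintro ⟨j, rfl⟩
    refine Finset.card_eq_one.mpr ⟨j, Finset.ext fun i => ?_⟩
    rcases eq_or_ne i j with rfl | hij <;> simp [*]

lemma hammingNorm_add_single_lt {x : ι → ZMod 2} {j : ι} (hx : x j ≠ 0) :
    hammingNorm (x + Pi.single j 1) < hammingNorm x := by
  refine Finset.card_lt_card (Finset.ssubset_iff_of_subset ?_ |>.mpr ⟨j, ?_⟩)
  · intro k
    rcases eq_or_ne k j with rfl | hkj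
    · simp [hx]
    · simp [hkj]
  · simp [hx, ZMod.add_one_eq_zero_of_ne_zero hx]

end SingleCoordinate

namespace Qc

variable {n : ℕ}

lemma adj_iff {x y : Fin n → ZMod 2} : (Qc n).Adj x y ↔ ∃ j, y = x + Pi.single j 1 := by
  have hdist : hammingDist x y = 1 ↔ ∃ j, y = x + Pi.single j 1 := by
    rw [hammingDist_eq_hammingNorm, hammingNorm_eq_one_iff]
    exact exists_congr fun j => neg_add_eq_iff_eq_add
  rw [Qc, fromRel_adj, hammingDist_comm y, or_self, hdist]
  refine ⟨And.right, fun h => ⟨?_, h⟩⟩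
  obtain ⟨j, rfl⟩ := h
  intro h
  simpa using congrFun (add_eq_left.mp h.symm) j

lemma adj_add_single (x : Fin n → ZMod 2) (j : Fin n) : (Qc n).Adj x (x + Pi.single j 1) :=
  adj_iff.mpr ⟨j, rfl⟩

lemma exists_eq_mk_add_single {e : Sym2 (Fin n → ZMod 2)} (he : e ∈ (Qc n).edgeSet) :
    ∃ u j, u j ≠ 0 ∧ e = s(u, u + Pi.single j 1) := by
  induction e using Sym2.ind with
  | _ x y =>
  have hxy : (Qc n).Adj x y := he
  obtain ⟨j, rfl⟩ := adj_iff.mp hxy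
  by_cases hx : x j = 0
  · refine ⟨x + Pi.single j 1, j, by simp [hx], ?_⟩
    rw [add_single_add_single, Sym2.eq_swap]
  · exact ⟨x, j, hx, rfl⟩

lemma reachable_sdiff_edge (hn : 2 ≤ n) (x : Fin n → ZMod 2) (c : Fin n) :
    (Qc n \ fromEdgeSet {s(x, x + Pi.single c 1)}).Reachable x (x + Pi.single c 1) := by
  have : Nontrivial (Fin n) := Fin.nontrivial_iff_two_le.mpr hn
  obtain ⟨c', hc'⟩ := exists_ne c
  -- every edge of the detour `x, x + e_c', x + e_c' + e_c, x + e_c` leaves the hyperplane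
  -- `{z | z c' = x c'}` containing the removed edge
  have key : ∀ p q, (Qc n).Adj p q → (p c' ≠ x c' ∨ q c' ≠ x c') →
      (Qc n \ fromEdgeSet {s(x, x + Pi.single c 1)}).Adj p q := by
    rintro p q hpq hne
    refine ⟨hpq, fun ⟨hmem, _⟩ => ?_⟩
    rcases Sym2.eq_iff.mp hmem with ⟨rfl, rfl⟩ | ⟨rfl, rfl⟩ <;> simp [hc'] at hne
  have hback : x + Pi.single c' 1 + Pi.single c 1 + Pi.single c' 1 = x + Pi.single c 1 := by
    rw [add_right_comm, add_single_add_single]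
  refine (key _ _ (adj_add_single x c') (by simp)).reachable.trans <|
    (key _ _ (adj_add_single _ c) (by simp [hc'])).reachable.trans ?_
  exact hback ▸ (key _ _ (adj_add_single _ c') (by simp [hc'])).reachable

lemma card_vertices : Nat.card (Fin n → ZMod 2) = 2 ^ n := by
  simp [Nat.card_eq_fintype_card, ZMod.card]

lemma two_pow_sub_one_le_ncard_edgeSet {G : SimpleGraph (Fin n → ZMod 2)} (hG : G.Connected) :
    2 ^ n - 1 ≤ G.edgeSet.ncard := by
  have := hG.card_vert_le_card_edgeSet_add_one
  rw [card_vertices, Nat.card_coe_set_eq] at this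
  omega

end Qc

section Lists

variable {α : Type*}

lemma List.mem_take_of_pairwise_of_lt {l : List α} {r : α → ℕ}
    (hl : l.Pairwise fun a b => r a ≤ r b) {e : α} (he : e ∈ l) {i : ℕ} (hi : i < l.length)
    (hlt : r e < r l[i]) : e ∈ l.take i := by
  obtain ⟨k, hk, rfl⟩ := List.mem_iff_getElem.mp he
  refine List.mem_take_iff_getElem.mpr ⟨k, lt_min ?_ hk, rfl⟩
  by_contra! hik
  obtain rfl | hik := hik.eq_or_lt
  · exact lt_irrefl _ hlt
  · exact (hl.rel_get_of_lt (a := ⟨i, hi⟩) (b := ⟨k, hk⟩) hik).not_gt hlt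

lemma List.Nodup.getElem_notMem_take {l : List α} (hl : l.Nodup) {i : ℕ} (hi : i < l.length) :
    l[i] ∉ l.take i := by
  intro h
  obtain ⟨k, hk, hki⟩ := List.mem_take_iff_getElem.mp h
  have := (hl.getElem_inj_iff (hi := by omega)).mp hki
  omega

end Lists

namespace SimpleGraph

variable {V : Type*}

lemma reachable_le_of_adj_le {G H : SimpleGraph V} (h : G.Adj ≤ H.Reachable) :
    G.Reachable ≤ H.Reachable := by
  simp only [reachable_eq_reflTransGen] at h ⊢
  exact Relation.reflTransGen_closed h

end SimpleGraph

section NewCube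

variable {V : Type*} {m : ℕ}

lemma NewCube.mono {H H' : SimpleGraph V} {e : Sym2 V} (hle : H ≤ H') (he : e ∉ H'.edgeSet)
    (h : NewCube m H e) : NewCube m H' e := by
  obtain ⟨f, ⟨hinj, hcopy⟩, hnew⟩ := h
  refine ⟨f, ⟨hinj, fun x y hxy => sup_le_sup_right hle _ (hcopy x y hxy)⟩,
    fun ⟨_, hcopy'⟩ => hnew ⟨hinj, fun x y hxy => ?_⟩⟩
  obtain hH | ⟨rfl, -⟩ := hcopy x y hxy
  · exact hH
  · exact absurd (hcopy' x y hxy) he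

lemma NewCube.reachable (hm : 2 ≤ m) {H : SimpleGraph V} {v w : V}
    (h : NewCube m H s(v, w)) : H.Reachable v w := by
  obtain ⟨f, ⟨hinj, hcopy⟩, hnew⟩ := h
  obtain ⟨x, y, hxy, hnxy⟩ : ∃ x y, (Qc m).Adj x y ∧ ¬ H.Adj (f x) (f y) := by
    by_contra! hall
    exact hnew ⟨hinj, hall⟩
  have hfxy : s(f x, f y) = s(v, w) := by
    obtain h | ⟨h, -⟩ := hcopy x y hxy
    exacts [absurd h hnxy, h]
  obtain ⟨c, rfl⟩ := Qc.adj_iff.mp hxy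
  let φ : Qc m \ fromEdgeSet {s(x, x + Pi.single c 1)} →g H :=
    ⟨f, fun {p q} ⟨hpq, hne⟩ => (hcopy p q hpq).resolve_right fun ⟨hpq', _⟩ =>
      hne ⟨Sym2.map.injective hinj (hpq'.trans hfxy.symm), hpq.ne⟩⟩
  have hreach := (Qc.reachable_sdiff_edge hm x c).map φ
  rcases Sym2.eq_iff.mp hfxy with ⟨rfl, rfl⟩ | ⟨rfl, rfl⟩
  exacts [hreach, hreach.symm]

end NewCube

namespace Qc

variable {n : ℕ}

def IsTopCoord (x : Fin n → ZMod 2) (j : Fin n) : Prop :=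
  x j ≠ 0 ∧ ∀ k, x k ≠ 0 → k ≤ j

lemma IsTopCoord.unique {x : Fin n → ZMod 2} {j k : Fin n} (hj : IsTopCoord x j)
    (hk : IsTopCoord x k) : j = k :=
  le_antisymm (hk.2 j hj.1) (hj.2 k hk.1)

lemma IsTopCoord.ne_zero {x : Fin n → ZMod 2} {j : Fin n} (hj : IsTopCoord x j) : x ≠ 0 :=
  fun hx => hj.1 (by simp [hx])

lemma exists_isTopCoord {x : Fin n → ZMod 2} (hx : x ≠ 0) : ∃ j, IsTopCoord x j := by
  obtain ⟨i, hi⟩ := Function.ne_iff.mp hx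
  obtain ⟨j, hj, hmax⟩ := Finset.exists_max_image {k | x k ≠ 0} id ⟨i, by simpa using hi⟩
  exact ⟨j, by simpa using hj, fun k hk => hmax k (by simpa using hk)⟩

lemma IsTopCoord.add_single {x : Fin n → ZMod 2} {j k : Fin n} (hk : IsTopCoord x k)
    (hjk : j < k) : IsTopCoord (x + Pi.single j 1) k := by
  refine ⟨by simpa [Pi.single_eq_of_ne hjk.ne'] using hk.1, fun i hi => ?_⟩
  rcases eq_or_ne i j with rfl | hij
  · exact hjk.le
  · exact hk.2 i (by simpa [Pi.single_eq_of_ne hij] using hi)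

def topTree (n : ℕ) : SimpleGraph (Fin n → ZMod 2) :=
  fromRel fun x y => ∃ j, IsTopCoord x j ∧ y = x + Pi.single j 1

lemma topTree_adj_add_single {x : Fin n → ZMod 2} {j : Fin n} (hj : IsTopCoord x j) :
    (topTree n).Adj x (x + Pi.single j 1) :=
  ⟨(adj_add_single x j).ne, Or.inl ⟨j, hj, rfl⟩⟩

lemma topTree_le : topTree n ≤ Qc n := by
  rintro x y ⟨-, ⟨j, -, rfl⟩ | ⟨j, -, rfl⟩⟩
  · exact adj_add_single x j
  · exact (adj_add_single y j).symm

lemma topTree_reachable_zero (x : Fin n → ZMod 2) : (topTree n).Reachable x 0 := by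
  induction hw : hammingNorm x using Nat.strong_induction_on generalizing x with
  | _ w ih =>
    obtain rfl | hx := eq_or_ne x 0
    · rfl
    obtain ⟨j, hj⟩ := exists_isTopCoord hx
    exact (topTree_adj_add_single hj).reachable.trans
      (ih _ (hw ▸ hammingNorm_add_single_lt hj.1) _ rfl)

lemma topTree_connected : (topTree n).Connected :=
  (connected_iff _).mpr
    ⟨fun x y => (topTree_reachable_zero x).trans (topTree_reachable_zero y).symm, ⟨0⟩⟩

lemma ncard_edgeSet_topTree_le : (topTree n).edgeSet.ncard ≤ 2 ^ n - 1 := by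
  classical
  let r (e : Sym2 (Fin n → ZMod 2)) (x : Fin n → ZMod 2) : Prop :=
    ∃ j, IsTopCoord x j ∧ e = s(x, x + Pi.single j 1)
  have hle := Finset.card_le_card_of_forall_subsingleton r
    (s := (Set.toFinite (topTree n).edgeSet).toFinset) (t := Finset.univ.erase 0) ?_ ?_
  · rwa [← Set.ncard_eq_toFinset_card, Finset.card_erase_of_mem (Finset.mem_univ _),
      Finset.card_univ, ← Nat.card_eq_fintype_card, card_vertices] at hle
  · intro e he
    induction e using Sym2.ind with
    | _ x y =>
    have hxy : (topTree n).Adj x y :=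
      (mem_edgeSet _).mp ((Set.Finite.mem_toFinset _).mp he)
    obtain ⟨-, ⟨j, hj, rfl⟩ | ⟨j, hj, rfl⟩⟩ := hxy
    · exact ⟨x, by simp [hj.ne_zero], j, hj, rfl⟩
    · exact ⟨y, by simp [hj.ne_zero], j, hj, Sym2.eq_swap⟩
  · rintro x - e₁ ⟨-, j₁, hj₁, rfl⟩ e₂ ⟨-, j₂, hj₂, rfl⟩
    rw [hj₁.unique hj₂]

lemma ncard_edgeSet_topTree : (topTree n).edgeSet.ncard = 2 ^ n - 1 :=
  ncard_edgeSet_topTree_le.antisymm (two_pow_sub_one_le_ncard_edgeSet topTree_connected)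

lemma topTree_isTree : (topTree n).IsTree := by
  rw [isTree_iff_connected_and_card, Nat.card_coe_set_eq, ncard_edgeSet_topTree,
    card_vertices]
  exact ⟨topTree_connected, Nat.sub_add_cancel Nat.one_le_two_pow⟩

lemma connected : (Qc n).Connected :=
  topTree_connected.mono topTree_le

end Qc

namespace WeaklySaturated

variable {n m : ℕ} {G : SimpleGraph (Fin n → ZMod 2)}

lemma qc_adj_le_reachable (hm : 2 ≤ m) (hG : WeaklySaturated n m G) :
    (Qc n).Adj ≤ G.Reachable := by
  obtain ⟨-, l, -, -, hcover, hnew⟩ := hG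
  have hprefix : ∀ k, (G ⊔ fromEdgeSet {e | e ∈ l.take k}).Adj ≤ G.Reachable := by
    intro k
    induction k with
    | zero => simpa using G.adj_le_reachable
    | succ k ih =>
      intro a b hab
      rw [sup_adj, fromEdgeSet_adj] at hab
      obtain hab | ⟨hmem, hne⟩ := hab
      · exact hab.reachable
      rw [Set.mem_ofPred_eq, List.take_add_one, List.mem_append] at hmem
      obtain hmem | hmem := hmem
      · exact ih a b (Or.inr ⟨hmem, hne⟩)
      obtain ⟨hk, hlk⟩ := List.getElem?_eq_some_iff.mp (Option.mem_toList.mp hmem)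
      have hcube := hnew ⟨k, hk⟩
      rw [List.get_eq_getElem, hlk] at hcube
      exact reachable_le_of_adj_le ih a b (hcube.reachable hm)
  intro a b hab
  refine hprefix l.length a b ?_
  rw [List.take_length, sup_adj, fromEdgeSet_adj]
  obtain h | h := hcover (show s(a, b) ∈ (Qc n).edgeSet from hab)
  exacts [Or.inl h, Or.inr ⟨h, hab.ne⟩]

lemma connected (hm : 2 ≤ m) (hG : WeaklySaturated n m G) : G.Connected :=
  (connected_iff _).mpr ⟨fun a b => reachable_le_of_adj_le (hG.qc_adj_le_reachable hm) a b
    (Qc.connected.preconnected a b), ⟨0⟩⟩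

lemma two_pow_sub_one_le_ncard_edgeSet (hm : 2 ≤ m) (hG : WeaklySaturated n m G) :
    2 ^ n - 1 ≤ G.edgeSet.ncard :=
  Qc.two_pow_sub_one_le_ncard_edgeSet (hG.connected hm)

end WeaklySaturated

lemma weaklySaturated_of_rank {n m : ℕ} {G : SimpleGraph (Fin n → ZMod 2)} (hG : G ≤ Qc n)
    (r : Sym2 (Fin n → ZMod 2) → ℕ)
    (h : ∀ e ∈ (Qc n).edgeSet \ G.edgeSet, NewCube m
      (G ⊔ fromEdgeSet {e' | e' ∈ (Qc n).edgeSet \ G.edgeSet ∧ r e' < r e}) e) :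
    WeaklySaturated n m G := by
  let l := (Set.toFinite ((Qc n).edgeSet \ G.edgeSet)).toFinset.toList.mergeSort
    fun a b => decide (r a ≤ r b)
  have hmem : ∀ e, e ∈ l ↔ e ∈ (Qc n).edgeSet \ G.edgeSet := by simp [l]
  have hnodup : l.Nodup := (List.mergeSort_perm _ _).nodup_iff.mpr (Finset.nodup_toList _)
  have hsorted : l.Pairwise fun a b => r a ≤ r b := by
    simpa using List.pairwise_mergeSort (le := fun a b => decide (r a ≤ r b))
      (fun a b c hab hbc => by simp only [decide_eq_true_eq] at *; omega)
      (fun a b => by simpa using le_total (r a) (r b)) _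
  refine ⟨hG, l, hnodup, fun e he => (hmem e).mp he, fun e he => ?_, fun i => ?_⟩
  · by_cases heG : e ∈ G.edgeSet
    exacts [Or.inl heG, Or.inr ((hmem e).mpr ⟨he, heG⟩)]
  · have hi := (hmem _).mp (List.getElem_mem i.2)
    have hearlier :
        {e' | e' ∈ (Qc n).edgeSet \ G.edgeSet ∧ r e' < r l[i]} ⊆ {e | e ∈ l.take i} :=
      fun e' ⟨he', hlt⟩ => List.mem_take_of_pairwise_of_lt hsorted ((hmem e').mpr he') i.2 hlt
    refine (h _ hi).mono (sup_le_sup_left (fromEdgeSet_mono hearlier) _) ?_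
    rw [edgeSet_sup, edgeSet_fromEdgeSet]
    rintro (hG' | ⟨htake, -⟩)
    exacts [hi.2 hG', hnodup.getElem_notMem_take i.2 htake]

namespace Qc

variable {n : ℕ}

lemma adj_add_single_of_adj {H : SimpleGraph (Fin n → ZMod 2)} {x : Fin n → ZMod 2} {j : Fin n}
    (h : H.Adj x (x + Pi.single j 1)) (α : ZMod 2) :
    H.Adj (x + Pi.single j α) (x + Pi.single j α + Pi.single j 1) := by
  rcases ZMod.eq_zero_or_one α with rfl | rfl
  · simpa using h
  · rw [add_single_add_single]
    exact h.symm

lemma isCubeCopy_square {H : SimpleGraph (Fin n → ZMod 2)} {u : Fin n → ZMod 2} {j k : Fin n}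
    (hjk : j ≠ k) (hj₀ : H.Adj u (u + Pi.single j 1))
    (hj₁ : H.Adj (u + Pi.single k 1) (u + Pi.single k 1 + Pi.single j 1))
    (hk₀ : H.Adj u (u + Pi.single k 1))
    (hk₁ : H.Adj (u + Pi.single j 1) (u + Pi.single j 1 + Pi.single k 1)) :
    IsCubeCopy 2 H fun a => u + Pi.single j (a 0) + Pi.single k (a 1) := by
  have hj : ∀ β, H.Adj (u + Pi.single k β) (u + Pi.single k β + Pi.single j 1) := by
    intro β
    rcases ZMod.eq_zero_or_one β with rfl | rfl
    exacts [by simpa using hj₀, hj₁]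
  have hk : ∀ α, H.Adj (u + Pi.single j α) (u + Pi.single j α + Pi.single k 1) := by
    intro α
    rcases ZMod.eq_zero_or_one α with rfl | rfl
    exacts [by simpa using hk₀, hk₁]
  refine ⟨fun a b hab => ?_, fun a b hab => ?_⟩
  · have hj := congrFun hab j
    have hk := congrFun hab k
    simp [hjk, hjk.symm] at hj hk
    funext i
    fin_cases i
    exacts [hj, hk]
  · obtain ⟨c, rfl⟩ := adj_iff.mp hab
    fin_cases c
    · have := adj_add_single_of_adj (hj (a 1)) (a 0)
      convert this using 1
      · exact add_right_comm _ _ _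
      · simp [Pi.single_add]
        abel
    · have := adj_add_single_of_adj (hk (a 0)) (a 1)
      convert this using 1
      simp [Pi.single_add]
      exact (add_assoc _ _ _).symm

lemma newCube_square {H : SimpleGraph (Fin n → ZMod 2)} {u : Fin n → ZMod 2} {j k : Fin n}
    (hjk : j ≠ k) (hj₁ : H.Adj (u + Pi.single k 1) (u + Pi.single k 1 + Pi.single j 1))
    (hk₀ : H.Adj u (u + Pi.single k 1))
    (hk₁ : H.Adj (u + Pi.single j 1) (u + Pi.single j 1 + Pi.single k 1))
    (hnot : ¬ H.Adj u (u + Pi.single j 1)) :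
    NewCube 2 H s(u, u + Pi.single j 1) := by
  have hle : H ≤ H ⊔ fromEdgeSet {s(u, u + Pi.single j 1)} := le_sup_left
  have hnew : (H ⊔ fromEdgeSet {s(u, u + Pi.single j 1)}).Adj u (u + Pi.single j 1) :=
    Or.inr ⟨rfl, (adj_add_single u j).ne⟩
  refine ⟨_, isCubeCopy_square hjk hnew (hle hj₁) (hle hk₀) (hle hk₁), fun hcopy => hnot ?_⟩
  simpa using hcopy.2 0 (Pi.single 0 1) (adj_iff.mpr ⟨0, (zero_add _).symm⟩)

def weight (e : Sym2 (Fin n → ZMod 2)) : ℕ :=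
  Sym2.lift ⟨fun x y => hammingNorm x + hammingNorm y, fun _ _ => add_comm _ _⟩ e

lemma topTree_weaklySaturated : WeaklySaturated n 2 (topTree n) := by
  refine weaklySaturated_of_rank topTree_le weight fun e ⟨heQ, heT⟩ => ?_
  obtain ⟨u, j, hu, rfl⟩ := exists_eq_mk_add_single heQ
  have hnot_top : ¬ IsTopCoord u j := fun h => heT (topTree_adj_add_single h)
  obtain ⟨k, hk⟩ := exists_isTopCoord fun h => hu (congrFun h j)
  have hjk : j < k := (hk.2 j hu).lt_of_ne fun h => hnot_top (h ▸ hk)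
  refine newCube_square hjk.ne ?_ (Or.inl (topTree_adj_add_single hk))
    (Or.inl (topTree_adj_add_single (hk.add_single hjk))) ?_
  · by_cases hT : (topTree n).Adj (u + Pi.single k 1) (u + Pi.single k 1 + Pi.single j 1)
    · exact Or.inl hT
    refine Or.inr ⟨⟨⟨adj_add_single _ _, hT⟩, ?_⟩, (adj_add_single _ _).ne⟩
    have h₀ := hammingNorm_add_single_lt hk.1
    have h₁ := hammingNorm_add_single_lt (hk.add_single hjk).1
    rw [add_right_comm] at h₁
    simp only [weight, Sym2.lift_mk]
    omega
  · rintro (hT | ⟨⟨-, hlt⟩, -⟩)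
    exacts [heT hT, lt_irrefl _ hlt]

end Qc

theorem stmt_8_general (n : ℕ) :
    wsatNum n 2 = 2 ^ n - 1 ∧
    (∃ G : SimpleGraph (Fin n → ZMod 2), WeaklySaturated n 2 G ∧ G.IsTree) ∧
    (∀ G : SimpleGraph (Fin n → ZMod 2), WeaklySaturated n 2 G →
      2 ^ n - 1 ≤ G.edgeSet.ncard) := by
  have hmem : 2 ^ n - 1 ∈
      {k | ∃ G : SimpleGraph (Fin n → ZMod 2), WeaklySaturated n 2 G ∧ G.edgeSet.ncard = k} :=
    ⟨_, Qc.topTree_weaklySaturated, Qc.ncard_edgeSet_topTree⟩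
  refine ⟨(Nat.sInf_le hmem).antisymm (le_csInf ⟨_, hmem⟩ ?_),
    ⟨_, Qc.topTree_weaklySaturated, Qc.topTree_isTree⟩,
    fun G hG => hG.two_pow_sub_one_le_ncard_edgeSet le_rfl⟩
  rintro k ⟨G, hG, rfl⟩
  exact hG.two_pow_sub_one_le_ncard_edgeSet le_rfl

/-- `w-sat(Q_n, Q_2) = 2^n − 1` for `n ≥ 1`: there is a weakly `(Q_n,Q_2)`-saturated
spanning tree of `Q_n`, and every weakly `(Q_n,Q_2)`-saturated graph has at least
`2^n − 1` edges. -/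
theorem stmt_8 (n : ℕ) (hn : 1 ≤ n) :
    wsatNum n 2 = 2 ^ n - 1 ∧
    (∃ G : SimpleGraph (Fin n → ZMod 2), WeaklySaturated n 2 G ∧ G.IsTree) ∧
    (∀ G : SimpleGraph (Fin n → ZMod 2), WeaklySaturated n 2 G →
      2 ^ n - 1 ≤ G.edgeSet.ncard) :=
  stmt_8_general n
end

section
/- Let n_0 = 2^t − 1 with t ≥ 2. There exists a Q_2-free spanning subgraph H of Q_{n_0} with at most 2^{n_0+1} edges, together with two disjoint sets C, D ⊆ {0,1}^{n_0} with |C| = 2^{n_0}/(n_0+1) and |D| = 3·2^{n_0}/(n_0+1), such that C and D are each independent dominating sets of H, and every edge of H is incident with C ∪ D. -/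
/-!
Label the coordinates of the cube by the nonzero vectors of `W = 𝔽₂ᵗ`. The syndrome
`σ x = ∑ xᵢ • eᵢ` is then linear and onto, its kernel `C` is the Hamming code, and for every
`w ≠ σ x` exactly one cube neighbour of `x` has syndrome `w`. Put `D = σ⁻¹ K` for three nonzero
syndromes `K = {u, v, u + v}`, join every word outside `C` to its neighbour in `C`, and every word
of syndrome `s ∉ K` to its neighbour of syndrome `τ s ∈ {u, v}`. This gives at most two edges per
word.

The four syndromes of a four-cycle are distinct and satisfy `σ c = σ a + σ b + σ d`. Some vertex
`a` of the cycle has syndrome `s ∉ K ∪ {0}`, so its two neighbours have syndromes `0` and `τ s`,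
and the opposite vertex, of syndrome `s + τ s`, is joined to the one of syndrome `τ s ∈ K`; this
forces `τ (s + τ s) = τ s`. Choosing `τ s` by a parity `φ s` with `φ u = φ v = 1` rules it out.
-/

open Function Pi

lemma AddMonoidHom.ncard_preimage_eq_mul {G M F : Type*} [AddGroup G] [Finite G] [AddMonoid M]
    [FunLike F G M] [AddMonoidHomClass F G M] (f : F) (hf : Surjective f) (S : Set M) :
    (f ⁻¹' S).ncard = S.ncard * (f ⁻¹' {0}).ncard := by
  classical
  have := Fintype.ofFinite G
  have : Fintype M := Fintype.ofSurjective f hf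
  have key : Finset.card {g | f g ∈ S.toFinset} =
      S.toFinset.card * Finset.card {g | f g = 0} := by
    rw [← Finset.sum_card_fiberwise_eq_card_filter, Finset.sum_const_nat]
    exact fun m _ => card_fiber_eq_of_mem_range f (hf m) (hf 0)
  rw [← Set.ncard_coe_finset, ← Set.ncard_coe_finset, ← Set.ncard_coe_finset] at key
  simpa [Set.preimage] using key

namespace SimpleGraph

variable {V : Type*} (G : SimpleGraph V)

def IsFourCycle (a b c d : V) : Prop :=
  G.Adj a b ∧ G.Adj b c ∧ G.Adj c d ∧ G.Adj d a ∧ a ≠ c ∧ b ≠ d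

variable {G} {a b c d : V}

lemma IsFourCycle.rotate (h : G.IsFourCycle a b c d) : G.IsFourCycle b c d a :=
  ⟨h.2.1, h.2.2.1, h.2.2.2.1, h.1, h.2.2.2.2.2, h.2.2.2.2.1.symm⟩

lemma IsFourCycle.reverse (h : G.IsFourCycle a b c d) : G.IsFourCycle a d c b :=
  ⟨h.2.2.2.1.symm, h.2.2.1.symm, h.2.1.symm, h.1.symm, h.2.2.2.2.1, h.2.2.2.2.2.symm⟩

lemma cubeFree_two_of_forall_not_isFourCycle (h : ∀ a b c d, ¬ G.IsFourCycle a b c d) :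
    CubeFree 2 G := by
  rintro ⟨f, hf, hadj⟩
  have hQ : ∀ x y : Fin 2 → ZMod 2, x ≠ y → hammingDist x y = 1 → (Qc 2).Adj x y :=
    fun x y hne hd => (fromRel_adj _ _ _).2 ⟨hne, Or.inl hd⟩
  exact h (f ![0, 0]) (f ![1, 0]) (f ![1, 1]) (f ![0, 1])
    ⟨hadj _ _ (hQ _ _ (by decide) (by decide)), hadj _ _ (hQ _ _ (by decide) (by decide)),
      hadj _ _ (hQ _ _ (by decide) (by decide)), hadj _ _ (hQ _ _ (by decide) (by decide)),
      hf.ne (by decide), hf.ne (by decide)⟩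

end SimpleGraph

section Cube

variable {ι : Type*} [DecidableEq ι]

lemma hammingDist_add_single [Fintype ι] (x : ι → ZMod 2) (i : ι) :
    hammingDist x (x + single i 1) = 1 := by
  rw [hammingDist_eq_hammingNorm, neg_add_cancel_left, hammingNorm, Finset.card_eq_one]
  exact ⟨i, by ext j; by_cases h : j = i <;> simp [h]⟩

lemma exists_eq_add_single_comm {x y : ι → ZMod 2} (h : ∃ i, y = x + single i 1) :
    ∃ i, x = y + single i 1 := by
  obtain ⟨i, rfl⟩ := h
  exact ⟨i, by rw [add_assoc, ZModModule.add_self, add_zero]⟩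

/-- In a square of the cube, opposite edges flip the same coordinate. -/
lemma eq_add_add_of_square {a b c d : ι → ZMod 2} {p q r s : ι}
    (hb : b = a + single p 1) (hc : c = b + single q 1) (hd : d = a + single s 1)
    (hc' : c = d + single r 1) (hac : a ≠ c) (hbd : b ≠ d) : c = a + b + d := by
  have hsum : (single p 1 + single q 1 : ι → ZMod 2) = single s 1 + single r 1 := by
    rw [← add_right_inj a, ← add_assoc, ← add_assoc, ← hb, ← hd, ← hc, ← hc']
  rcases (single_add_single_eq_single_add_single one_ne_zero one_ne_zero).1 hsum with
    ⟨rfl, -⟩ | ⟨-, -, rfl⟩ | ⟨-, rfl, -⟩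
  · exact absurd (hb.trans hd.symm) hbd
  · calc c = (a + a) + a + single p 1 + single q 1 := by
          rw [hc, hb, ZModModule.add_self, zero_add]
      _ = a + b + d := by rw [hb, hd]; abel
  · exact absurd (by rw [hc, hb, add_assoc, ZModModule.add_self, add_zero]) hac

end Cube

section Syndrome

variable {ι W : Type*} [Fintype ι] [DecidableEq ι] [AddCommGroup W] [Module (ZMod 2) W]
  (e : ι ≃ {w : W // w ≠ 0})

/-- Coordinate `i` is labelled by the nonzero vector `e i`; these are the columns of the
parity-check matrix of the Hamming code `syndrome e ⁻¹' {0}`. -/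
def syndrome : (ι → ZMod 2) →ₗ[ZMod 2] W :=
  Fintype.linearCombination (ZMod 2) fun i => (e i : W)

lemma syndrome_add_single (x : ι → ZMod 2) (i : ι) :
    syndrome e (x + single i 1) = syndrome e x + e i := by
  rw [map_add, syndrome, Fintype.linearCombination_apply_single, one_smul]

lemma syndrome_add_single_ne (x : ι → ZMod 2) (i : ι) :
    syndrome e (x + single i 1) ≠ syndrome e x := by
  rw [syndrome_add_single, Ne, add_eq_left]
  exact (e i).2

lemma injOn_syndrome_neighbors (x : ι → ZMod 2) :
    Set.InjOn (syndrome e) {y | ∃ i, y = x + single i 1} := by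
  rintro _ ⟨i, rfl⟩ _ ⟨j, rfl⟩ h
  rw [syndrome_add_single, syndrome_add_single, add_right_inj] at h
  rw [e.injective (Subtype.ext h)]

lemma exists_syndrome_add_single_eq (x : ι → ZMod 2) {w : W} (hw : w ≠ syndrome e x) :
    ∃ i, syndrome e (x + single i 1) = w := by
  have hne : syndrome e x + w ≠ 0 := fun h =>
    hw (by rw [eq_neg_of_add_eq_zero_right h, ZModModule.neg_eq_self])
  refine ⟨e.symm ⟨_, hne⟩, ?_⟩
  rw [syndrome_add_single, Equiv.apply_symm_apply, ← add_assoc, ZModModule.add_self, zero_add]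

lemma syndrome_surjective : Surjective (syndrome e) := by
  intro w
  by_cases hw : w = syndrome e 0
  · exact ⟨0, hw.symm⟩
  · obtain ⟨i, hi⟩ := exists_syndrome_add_single_eq e 0 hw
    exact ⟨_, hi⟩

variable (K : Set W) (τ : W → W)

def SyndromeRel (s s' : W) : Prop :=
  s' = 0 ∨ (s ∉ K ∧ s' = τ s)

def syndromeGraph : SimpleGraph (ι → ZMod 2) :=
  SimpleGraph.fromRel fun x y =>
    (∃ i, y = x + single i 1) ∧ SyndromeRel K τ (syndrome e x) (syndrome e y)

variable {e K τ} {x y : ι → ZMod 2}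

lemma syndromeGraph_adj : (syndromeGraph e K τ).Adj x y ↔ (∃ i, y = x + single i 1) ∧
    (SyndromeRel K τ (syndrome e x) (syndrome e y) ∨
      SyndromeRel K τ (syndrome e y) (syndrome e x)) := by
  rw [syndromeGraph, SimpleGraph.fromRel_adj]
  constructor
  · rintro ⟨-, ⟨hxy, h⟩ | ⟨hyx, h⟩⟩
    · exact ⟨hxy, Or.inl h⟩
    · exact ⟨exists_eq_add_single_comm hyx, Or.inr h⟩
  · rintro ⟨⟨i, rfl⟩, h⟩
    exact ⟨fun h' => syndrome_add_single_ne e x i (congrArg _ h').symm,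
      h.imp (fun h => ⟨⟨i, rfl⟩, h⟩) fun h => ⟨exists_eq_add_single_comm ⟨i, rfl⟩, h⟩⟩

lemma exists_eq_add_single_of_adj (h : (syndromeGraph e K τ).Adj x y) :
    ∃ i, y = x + single i 1 :=
  (syndromeGraph_adj.1 h).1

lemma syndromeGraph_le_Qc {n : ℕ} (e : Fin n ≃ {w : W // w ≠ 0}) :
    syndromeGraph e K τ ≤ Qc n := fun x y h => by
  obtain ⟨i, rfl⟩ := exists_eq_add_single_of_adj h
  exact (SimpleGraph.fromRel_adj _ _ _).2 ⟨h.ne, Or.inl (hammingDist_add_single x i)⟩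

lemma syndrome_ne_of_adj (h : (syndromeGraph e K τ).Adj x y) : syndrome e x ≠ syndrome e y := by
  obtain ⟨i, rfl⟩ := exists_eq_add_single_of_adj h
  exact (syndrome_add_single_ne e x i).symm

lemma not_adj_of_syndrome_eq_zero (hx : syndrome e x = 0) (hy : syndrome e y = 0) :
    ¬ (syndromeGraph e K τ).Adj x y :=
  fun h => syndrome_ne_of_adj h (hx.trans hy.symm)

lemma syndrome_eq_zero_or_eq_of_adj (hτK : Set.MapsTo τ Kᶜ K)
    (h : (syndromeGraph e K τ).Adj x y) (hx : syndrome e x ∉ K) (hx0 : syndrome e x ≠ 0) :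
    syndrome e y = 0 ∨ syndrome e y = τ (syndrome e x) := by
  rcases (syndromeGraph_adj.1 h).2 with (h0 | ⟨-, hyx⟩) | (h0 | ⟨hy, hxy⟩)
  · exact Or.inl h0
  · exact Or.inr hyx
  · exact absurd h0 hx0
  · exact absurd (hxy ▸ hτK hy) hx

lemma syndrome_notMem_of_adj (hK0 : (0 : W) ∉ K) (h : (syndromeGraph e K τ).Adj x y)
    (hy : syndrome e y ∈ K) (hx0 : syndrome e x ≠ 0) :
    syndrome e x ∉ K ∧ syndrome e y = τ (syndrome e x) := by
  rcases (syndromeGraph_adj.1 h).2 with (h0 | hxy) | (h0 | ⟨hy', -⟩)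
  · exact absurd (h0 ▸ hy) hK0
  · exact hxy
  · exact absurd h0 hx0
  · exact absurd hy hy'

lemma not_adj_of_syndrome_mem (hK0 : (0 : W) ∉ K) (hx : syndrome e x ∈ K)
    (hy : syndrome e y ∈ K) : ¬ (syndromeGraph e K τ).Adj x y := fun h =>
  (syndrome_notMem_of_adj hK0 h hy fun hx0 => hK0 (hx0 ▸ hx)).1 hx

lemma exists_adj_syndrome_eq_zero (hx : syndrome e x ≠ 0) :
    ∃ y ∈ syndrome e ⁻¹' {0}, (syndromeGraph e K τ).Adj x y := by
  obtain ⟨i, hi⟩ := exists_syndrome_add_single_eq e x (Ne.symm hx)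
  exact ⟨_, hi, syndromeGraph_adj.2 ⟨⟨i, rfl⟩, Or.inl (Or.inl hi)⟩⟩

lemma exists_adj_syndrome_mem (hτK : Set.MapsTo τ Kᶜ K) (hx : syndrome e x ∉ K) :
    ∃ y ∈ syndrome e ⁻¹' K, (syndromeGraph e K τ).Adj x y := by
  obtain ⟨i, hi⟩ := exists_syndrome_add_single_eq e x fun h => hx (h ▸ hτK hx)
  exact ⟨_, Set.mem_preimage.2 (hi ▸ hτK hx),
    syndromeGraph_adj.2 ⟨⟨i, rfl⟩, Or.inl (Or.inr ⟨hx, hi⟩)⟩⟩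

lemma syndrome_mem_of_adj (hτK : Set.MapsTo τ Kᶜ K) (h : (syndromeGraph e K τ).Adj x y) :
    x ∈ syndrome e ⁻¹' {0} ∪ syndrome e ⁻¹' K ∨ y ∈ syndrome e ⁻¹' {0} ∪ syndrome e ⁻¹' K := by
  rcases (syndromeGraph_adj.1 h).2 with (h0 | ⟨hx, hyx⟩) | (h0 | ⟨hy, hxy⟩)
  · exact Or.inr (Or.inl h0)
  · exact Or.inr (Or.inr (Set.mem_preimage.2 (hyx ▸ hτK hx)))
  · exact Or.inl (Or.inl h0)
  · exact Or.inl (Or.inr (Set.mem_preimage.2 (hxy ▸ hτK hy)))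

lemma ncard_edgeSet_syndromeGraph_le :
    (syndromeGraph e K τ).edgeSet.ncard ≤ 2 * Nat.card (ι → ZMod 2) := by
  classical
  set P := {p : (ι → ZMod 2) × (ι → ZMod 2) | (∃ i, p.2 = p.1 + single i 1) ∧
    SyndromeRel K τ (syndrome e p.1) (syndrome e p.2)}
  have hsub : (syndromeGraph e K τ).edgeSet ⊆ (fun p => s(p.1, p.2)) '' P := by
    rintro ⟨x, y⟩ h
    rcases (syndromeGraph_adj.1 h) with ⟨hxy, hr | hr⟩
    · exact ⟨(x, y), ⟨hxy, hr⟩, rfl⟩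
    · exact ⟨(y, x), ⟨exists_eq_add_single_comm hxy, hr⟩, Sym2.eq_swap⟩
  -- a word has at most one neighbour of each of the two syndromes `0` and `τ s`
  have hinj : Set.InjOn (fun p => (p.1, decide (syndrome e p.2 = 0))) P := by
    rintro ⟨x, y⟩ ⟨hy, hxy⟩ ⟨x', y'⟩ ⟨hy', hxy'⟩ h
    simp only [Prod.mk.injEq, decide_eq_decide] at h
    obtain ⟨rfl, h0⟩ := h
    refine Prod.ext rfl (injOn_syndrome_neighbors e x hy hy' ?_)
    rcases hxy with h1 | ⟨-, h1⟩
    · rw [h1, h0.1 h1]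
    · rcases hxy' with h2 | ⟨-, h2⟩
      · rw [h0.2 h2, h2]
      · rw [h1, h2]
  calc (syndromeGraph e K τ).edgeSet.ncard ≤ ((fun p => s(p.1, p.2)) '' P).ncard :=
        Set.ncard_le_ncard hsub
    _ ≤ P.ncard := Set.ncard_image_le
    _ ≤ (Set.univ : Set ((ι → ZMod 2) × Bool)).ncard :=
      Set.ncard_le_ncard_of_injOn _ (fun _ _ => Set.mem_univ _) hinj
    _ = 2 * Nat.card (ι → ZMod 2) := by simp [mul_comm]

variable {a b c d : ι → ZMod 2}

lemma SimpleGraph.IsFourCycle.syndrome_ne (h : (syndromeGraph e K τ).IsFourCycle a b c d) :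
    syndrome e a ≠ syndrome e c := fun hac =>
  h.2.2.2.2.1 (injOn_syndrome_neighbors e b (exists_eq_add_single_of_adj h.1.symm)
    (exists_eq_add_single_of_adj h.2.1) hac)

lemma SimpleGraph.IsFourCycle.syndrome_eq_add_add
    (h : (syndromeGraph e K τ).IsFourCycle a b c d) :
    syndrome e c = syndrome e a + syndrome e b + syndrome e d := by
  obtain ⟨p, hb⟩ := exists_eq_add_single_of_adj h.1
  obtain ⟨q, hc⟩ := exists_eq_add_single_of_adj h.2.1
  obtain ⟨s, hd⟩ := exists_eq_add_single_of_adj h.2.2.2.1.symm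
  obtain ⟨r, hc'⟩ := exists_eq_add_single_of_adj h.2.2.1.symm
  rw [eq_add_add_of_square hb hc hd hc' h.2.2.2.2.1 h.2.2.2.2.2, map_add, map_add]

lemma not_isFourCycle_of_syndrome_eq_zero (hK0 : (0 : W) ∉ K) (hτK : Set.MapsTo τ Kᶜ K)
    (hτ : ∀ s ∉ K, τ (s + τ s) ≠ τ s)
    (h : (syndromeGraph e K τ).IsFourCycle a b c d)
    (ha : syndrome e a ∉ K) (hb : syndrome e b = 0) (hd : syndrome e d = τ (syndrome e a)) :
    False := by
  have hc0 : syndrome e c ≠ 0 := hb ▸ (syndrome_ne_of_adj h.2.1).symm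
  obtain ⟨-, hdc⟩ := syndrome_notMem_of_adj hK0 h.2.2.1 (hd ▸ hτK ha) hc0
  have hc : syndrome e c = syndrome e a + τ (syndrome e a) := by
    rw [h.syndrome_eq_add_add, hb, add_zero, hd]
  exact hτ _ ha (by rw [← hc, ← hdc, hd])

lemma not_isFourCycle_of_syndrome_notMem (hK0 : (0 : W) ∉ K) (hτK : Set.MapsTo τ Kᶜ K)
    (hτ : ∀ s ∉ K, τ (s + τ s) ≠ τ s)
    (h : (syndromeGraph e K τ).IsFourCycle a b c d)
    (ha : syndrome e a ∉ K) (ha0 : syndrome e a ≠ 0) : False := by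
  have hbd := h.rotate.syndrome_ne
  rcases syndrome_eq_zero_or_eq_of_adj hτK h.1 ha ha0 with hb | hb <;>
    rcases syndrome_eq_zero_or_eq_of_adj hτK h.2.2.2.1.symm ha ha0 with hd | hd
  · exact hbd (hb.trans hd.symm)
  · exact not_isFourCycle_of_syndrome_eq_zero hK0 hτK hτ h ha hb hd
  · exact not_isFourCycle_of_syndrome_eq_zero hK0 hτK hτ h.reverse ha hd hb
  · exact hbd (hb.trans hd.symm)

lemma not_isFourCycle_syndromeGraph (hK0 : (0 : W) ∉ K) (hτK : Set.MapsTo τ Kᶜ K)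
    (hτ : ∀ s ∉ K, τ (s + τ s) ≠ τ s) :
    ¬ (syndromeGraph e K τ).IsFourCycle a b c d := by
  intro h
  by_cases ha0 : syndrome e a = 0
  · have hb0 : syndrome e b ≠ 0 := fun hb => syndrome_ne_of_adj h.1 (ha0.trans hb.symm)
    by_cases hbK : syndrome e b ∈ K
    · have hc0 : syndrome e c ≠ 0 := ha0 ▸ h.syndrome_ne.symm
      exact not_isFourCycle_of_syndrome_notMem hK0 hτK hτ h.rotate.rotate
        (syndrome_notMem_of_adj hK0 h.2.1.symm hbK hc0).1 hc0
    · exact not_isFourCycle_of_syndrome_notMem hK0 hτK hτ h.rotate hbK hb0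
  by_cases haK : syndrome e a ∈ K
  · by_cases hb0 : syndrome e b = 0
    · have hd0 : syndrome e d ≠ 0 := hb0 ▸ h.rotate.syndrome_ne.symm
      exact not_isFourCycle_of_syndrome_notMem hK0 hτK hτ h.rotate.rotate.rotate
        (syndrome_notMem_of_adj hK0 h.2.2.2.1 haK hd0).1 hd0
    · exact not_isFourCycle_of_syndrome_notMem hK0 hτK hτ h.rotate
        (syndrome_notMem_of_adj hK0 h.1.symm haK hb0).1 hb0
  · exact not_isFourCycle_of_syndrome_notMem hK0 hτK hτ h haK ha0

lemma cubeFree_two_syndromeGraph (hK0 : (0 : W) ∉ K) (hτK : Set.MapsTo τ Kᶜ K)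
    (hτ : ∀ s ∉ K, τ (s + τ s) ≠ τ s) :
    CubeFree 2 (syndromeGraph e K τ) :=
  SimpleGraph.cubeFree_two_of_forall_not_isFourCycle fun _ _ _ _ =>
    not_isFourCycle_syndromeGraph hK0 hτK hτ

end Syndrome

section Switch

variable {W : Type*} [AddCommGroup W] [Module (ZMod 2) W]

def switch (φ : W →ₗ[ZMod 2] ZMod 2) (u v s : W) : W :=
  if φ s = 0 then u else v

variable {φ : W →ₗ[ZMod 2] ZMod 2} {u v : W}

lemma switch_mem (s : W) : switch φ u v s ∈ ({u, v, u + v} : Set W) := by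
  unfold switch; split_ifs <;> simp

lemma switch_add_switch_ne (hu : φ u = 1) (hv : φ v = 1) (huv : u ≠ v) (s : W) :
    switch φ u v (s + switch φ u v s) ≠ switch φ u v s := by
  rcases (by decide : ∀ a : ZMod 2, a = 0 ∨ a = 1) (φ s) with hs | hs <;>
    simp [switch, hs, hu, hv, huv, huv.symm, (by decide : (1 : ZMod 2) + 1 = 0)]

lemma zero_notMem_triple (hu : φ u = 1) (hv : φ v = 1) (huv : u ≠ v) :
    (0 : W) ∉ ({u, v, u + v} : Set W) := by
  simp only [Set.mem_insert_iff, Set.mem_singleton_iff, not_or]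
  refine ⟨fun h => by simp [← h] at hu, fun h => by simp [← h] at hv, fun h => huv ?_⟩
  rw [eq_neg_of_add_eq_zero_left h.symm, ZModModule.neg_eq_self]

lemma ncard_triple_eq_three (hu : φ u = 1) (hv : φ v = 1) (huv : u ≠ v) :
    ({u, v, u + v} : Set W).ncard = 3 := by
  refine Set.ncard_eq_three.2 ⟨u, v, u + v, huv, fun h => ?_, fun h => ?_, rfl⟩
  · simp [left_eq_add.1 h] at hv
  · simp [right_eq_add.1 h] at hu

end Switch

lemma exists_switch {ι : Type*} [Fintype ι] [DecidableEq ι] {i j : ι} (hij : i ≠ j) :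
    ∃ (K : Set (ι → ZMod 2)) (τ : (ι → ZMod 2) → ι → ZMod 2), K.ncard = 3 ∧ 0 ∉ K ∧
      Set.MapsTo τ Kᶜ K ∧ ∀ s ∉ K, τ (s + τ s) ≠ τ s := by
  set φ := Fintype.linearCombination (ZMod 2) fun _ : ι => (1 : ZMod 2)
  have hφ : ∀ k, φ (single k 1) = 1 := fun k => by
    simp [φ, Fintype.linearCombination_apply_single]
  have huv : (single i 1 : ι → ZMod 2) ≠ single j 1 := fun h => by
    simpa [hij] using congrFun h i
  exact ⟨_, switch φ (single i 1) (single j 1), ncard_triple_eq_three (hφ i) (hφ j) huv,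
    zero_notMem_triple (hφ i) (hφ j) huv, fun s _ => switch_mem s,
    fun s _ => switch_add_switch_ne (hφ i) (hφ j) huv s⟩

/-- For `n₀ = 2^t − 1`, `t ≥ 2`: there is a `Q_2`-free (spanning) subgraph `H` of `Q_{n₀}`
with at most `2^{n₀+1}` edges, and disjoint sets `C, D` with `|C| = 2^{n₀}/(n₀+1)`,
`|D| = 3·2^{n₀}/(n₀+1)`, each an independent dominating set of `H`, such that every edge
of `H` is incident with `C ∪ D`. -/
theorem stmt_16 (t : ℕ) (ht : 2 ≤ t) :
    ∃ (H : SimpleGraph (Fin (2 ^ t - 1) → ZMod 2))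
      (C D : Set (Fin (2 ^ t - 1) → ZMod 2)),
      H ≤ Qc (2 ^ t - 1) ∧ CubeFree 2 H ∧
      H.edgeSet.ncard ≤ 2 ^ (2 ^ t - 1 + 1) ∧
      Disjoint C D ∧
      C.ncard = 2 ^ (2 ^ t - 1) / (2 ^ t - 1 + 1) ∧
      D.ncard = 3 * 2 ^ (2 ^ t - 1) / (2 ^ t - 1 + 1) ∧
      (∀ x ∈ C, ∀ y ∈ C, ¬ H.Adj x y) ∧
      (∀ x ∈ D, ∀ y ∈ D, ¬ H.Adj x y) ∧
      (∀ x, x ∉ C → ∃ c ∈ C, H.Adj x c) ∧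
      (∀ x, x ∉ D → ∃ d ∈ D, H.Adj x d) ∧
      (∀ x y, H.Adj x y → x ∈ C ∪ D ∨ y ∈ C ∪ D) := by
  obtain ⟨K, τ, hK3, hK0, hτK, hτ⟩ :=
    exists_switch (i := (⟨0, by omega⟩ : Fin t)) (j := ⟨1, by omega⟩) (by simp)
  obtain ⟨e⟩ : Nonempty (Fin (2 ^ t - 1) ≃ {w : Fin t → ZMod 2 // w ≠ 0}) :=
    Fintype.card_eq.mp (by simp [Fintype.card_subtype_compl])
  have hW : 2 ^ t - 1 + 1 = Nat.card (Fin t → ZMod 2) := by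
    simp [Nat.sub_add_cancel Nat.one_le_two_pow]
  have hV : 2 ^ (2 ^ t - 1) = Nat.card (Fin t → ZMod 2) * (syndrome e ⁻¹' {0}).ncard := by
    simpa using AddMonoidHom.ncard_preimage_eq_mul (syndrome e) (syndrome_surjective e) .univ
  refine ⟨syndromeGraph e K τ, syndrome e ⁻¹' {0}, syndrome e ⁻¹' K, syndromeGraph_le_Qc e,
    cubeFree_two_syndromeGraph hK0 hτK hτ, ?_, ?_, ?_, ?_,
    fun x hx y hy => not_adj_of_syndrome_eq_zero hx hy,
    fun x hx y hy => not_adj_of_syndrome_mem hK0 hx hy,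
    fun x hx => exists_adj_syndrome_eq_zero hx, fun x hx => exists_adj_syndrome_mem hτK hx,
    fun x y h => syndrome_mem_of_adj hτK h⟩
  · exact ncard_edgeSet_syndromeGraph_le.trans (by simp [pow_succ'])
  · exact Set.disjoint_left.2 fun x hx hxK => hK0 (hx ▸ hxK)
  · rw [hV, hW, Nat.mul_div_cancel_left _ Nat.card_pos]
  · rw [AddMonoidHom.ncard_preimage_eq_mul (syndrome e) (syndrome_surjective e), hK3, hV, hW,
      Nat.mul_left_comm, Nat.mul_div_cancel_left _ Nat.card_pos]
end
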